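/- arXiv:2311.06511 — 3 statements merged into one kernel-verified Lean document; each statement's English description precedes it below -/
import Mathlib

section
/- Let $K\subset\mathbb{C}$ be a compact set, $n\geq 1$, and let $Z\subseteq K$ be a finite set and $c\geq 1$ a constant such that $\sup_{z\in K}|p(z)|\leq c\,\max_{z\in Z}|p(z)|$ for every complex polynomial $p$ of degree at most $n$. Let $\xi_1,\dots,\xi_M\in K$ be distinct points and $\phi_1,\dots,\phi_M$ complex polynomials of degree at most $n$, and define $L:C(K)\to C(K)$ by $Lf(z)=\sum_{j=1}^{M}f(\xi_j)\phi_j(z)$ and $\lambda(z)=\sum_{j=1}^{M}|\phi_j(z)|$. Then $\max_{z\in Z}\lambda(z) \leq \|L\| \leq c\,\max_{z\in Z}\lambda(z)$, where $\|L\|$ is the operator norm of $L$ with respect to the sup-norm on $C(K)$. -/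
/-!
For `z ∈ K` choose unimodular `u j` with `u j * φ j z = ‖φ j z‖`. The polynomial `∑ u j • φ j`
has degree at most `n`, takes the value `λ z` at `z` and has modulus at most `λ` on `Z`, so the
norming inequality gives `λ z ≤ c * max_Z λ`; with the Lebesgue-function estimate this bounds
`‖L‖`. Conversely, Tietze's extension theorem gives `f` with `‖f‖ ≤ 1` and `f (ξ j) = u j` at the
distinct nodes, and then `L f z = λ z`.
-/

open Polynomial

theorem ContinuousMap.exists_norm_le_one_apply_eq {X ι 𝕜 : Type*} [TopologicalSpace X]
    [CompactSpace X] [T2Space X] [Finite ι] [RCLike 𝕜] {ξ : ι → X}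
    (hξ : Function.Injective ξ) {a : ι → 𝕜} (ha : ∀ i, ‖a i‖ ≤ 1) :
    ∃ f : C(X, 𝕜), ‖f‖ ≤ 1 ∧ ∀ i, f (ξ i) = a i := by
  let : TopologicalSpace ι := ⊥
  have : DiscreteTopology ι := ⟨rfl⟩
  have hemb : Topology.IsClosedEmbedding ξ := continuous_of_discreteTopology.isClosedEmbedding hξ
  obtain ⟨f, hf_ball, hf_ext⟩ := ContinuousMap.exists_extension_forall_mem hemb
    (⟨a, continuous_of_discreteTopology⟩ : C(ι, 𝕜)) (t := Metric.closedBall 0 1)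
    (by simpa using ha)
  exact ⟨f, (f.norm_le zero_le_one).2 fun x => by simpa using hf_ball x,
    fun i => DFunLike.congr_fun hf_ext i⟩

section SamplingOperator

variable {X ι 𝕜 : Type*} [TopologicalSpace X] [CompactSpace X] [Fintype ι] [RCLike 𝕜]
  {L : C(X, 𝕜) →L[𝕜] C(X, 𝕜)} {ξ : ι → X} {ψ : ι → X → 𝕜}

theorem opNorm_le_of_sum_norm_le (hL : ∀ f x, L f x = ∑ j, f (ξ j) * ψ j x) {B : ℝ}
    (hB : 0 ≤ B) (hψ : ∀ x, ∑ j, ‖ψ j x‖ ≤ B) : ‖L‖ ≤ B := by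
  refine L.opNorm_le_bound hB fun f => (ContinuousMap.norm_le _ (by positivity)).2 fun x => ?_
  calc ‖L f x‖ = ‖∑ j, f (ξ j) * ψ j x‖ := by rw [hL]
    _ ≤ ∑ j, ‖f‖ * ‖ψ j x‖ := by
        refine norm_sum_le_of_le _ fun j _ => ?_
        rw [norm_mul]
        exact mul_le_mul_of_nonneg_right (f.norm_coe_le_norm _) (norm_nonneg _)
    _ = ‖f‖ * ∑ j, ‖ψ j x‖ := (Finset.mul_sum _ _ _).symm
    _ ≤ B * ‖f‖ := by rw [mul_comm B]; exact mul_le_mul_of_nonneg_left (hψ x) (norm_nonneg f)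

theorem sum_norm_le_opNorm [T2Space X] (hL : ∀ f x, L f x = ∑ j, f (ξ j) * ψ j x)
    (hξ : Function.Injective ξ) (x : X) : ∑ j, ‖ψ j x‖ ≤ ‖L‖ := by
  choose u hu_norm hu_mul using fun j => RCLike.exists_norm_eq_mul_self (ψ j x)
  obtain ⟨f, hf_norm, hf_ξ⟩ := ContinuousMap.exists_norm_le_one_apply_eq hξ (a := u) fun j =>
    (hu_norm j).le
  have hLf : L f x = ((∑ j, ‖ψ j x‖ : ℝ) : 𝕜) := by
    simp only [hL, hf_ξ, ← hu_mul, RCLike.ofReal_sum]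
  calc ∑ j, ‖ψ j x‖ = ‖L f x‖ := by
        rw [hLf, RCLike.norm_ofReal, abs_of_nonneg (by positivity)]
    _ ≤ ‖L f‖ := (L f).norm_coe_le_norm x
    _ ≤ ‖L‖ * ‖f‖ := L.le_opNorm f
    _ ≤ ‖L‖ := mul_le_of_le_one_right (norm_nonneg L) hf_norm

end SamplingOperator

theorem sum_norm_eval_le_of_norming {ι 𝕜 : Type*} [Fintype ι] [RCLike 𝕜] {n : ℕ}
    {Z : Finset 𝕜} (hZne : Z.Nonempty) {c : ℝ} (hc : 0 ≤ c) {z : 𝕜}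
    (hz : ∀ p : 𝕜[X], p ∈ degreeLE 𝕜 n → ‖p.eval z‖ ≤ c * Z.sup' hZne fun w => ‖p.eval w‖)
    {φ : ι → 𝕜[X]} (hφ : ∀ j, φ j ∈ degreeLE 𝕜 n) :
    ∑ j, ‖(φ j).eval z‖ ≤ c * Z.sup' hZne fun w => ∑ j, ‖(φ j).eval w‖ := by
  choose u hu_norm hu_mul using fun j => RCLike.exists_norm_eq_mul_self ((φ j).eval z)
  set p := ∑ j, u j • φ j
  have hp : p ∈ degreeLE 𝕜 n := Submodule.sum_mem _ fun j _ => Submodule.smul_mem _ _ (hφ j)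
  have hp_eval (w : 𝕜) : p.eval w = ∑ j, u j * (φ j).eval w := by
    simp only [p, eval_finsetSum, eval_smul, smul_eq_mul]
  have hp_z : ‖p.eval z‖ = ∑ j, ‖(φ j).eval z‖ := by
    rw [hp_eval, ← Finset.sum_congr rfl fun j _ => hu_mul j, ← RCLike.ofReal_sum,
      RCLike.norm_ofReal, abs_of_nonneg (by positivity)]
  have hp_Z : (Z.sup' hZne fun w => ‖p.eval w‖) ≤ Z.sup' hZne fun w => ∑ j, ‖(φ j).eval w‖ :=
    Finset.sup'_mono_fun fun w _ => by
      rw [hp_eval]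
      refine norm_sum_le_of_le _ fun j _ => ?_
      rw [norm_mul, hu_norm, one_mul]
  calc ∑ j, ‖(φ j).eval z‖ = ‖p.eval z‖ := hp_z.symm
    _ ≤ c * Z.sup' hZne fun w => ‖p.eval w‖ := hz p hp
    _ ≤ _ := mul_le_mul_of_nonneg_left hp_Z hc

theorem lebesgue_constant_mesh_estimate_general (K : Set ℂ) [CompactSpace K]
    (n : ℕ) (Z : Finset ℂ) (hZne : Z.Nonempty) (hZK : ↑Z ⊆ K)
    (c : ℝ) (hc : 1 ≤ c)
    (hnorm : ∀ p : Polynomial ℂ, p.degree ≤ (n : ℕ) →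
      ∀ z ∈ K, ‖p.eval z‖ ≤
        c * Z.sup' hZne (fun w => ‖p.eval w‖))
    (M : ℕ) (ξ : Fin M → K) (hξ : Function.Injective ξ)
    (φ : Fin M → Polynomial ℂ) (hφ : ∀ j, (φ j).degree ≤ (n : ℕ))
    (L : C(K, ℂ) →L[ℂ] C(K, ℂ))
    (hL : ∀ f : C(K, ℂ), ∀ z : K,
      L f z = ∑ j : Fin M, f (ξ j) * (φ j).eval (z : ℂ)) :
    Z.sup' hZne (fun z => ∑ j : Fin M, ‖(φ j).eval z‖) ≤ ‖L‖ ∧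
    ‖L‖ ≤ c * Z.sup' hZne (fun z => ∑ j : Fin M, ‖(φ j).eval z‖) := by
  have hc₀ : 0 ≤ c := zero_le_one.trans hc
  have hmax_nonneg : 0 ≤ Z.sup' hZne fun z => ∑ j : Fin M, ‖(φ j).eval z‖ :=
    Finset.le_sup'_of_le _ hZne.choose_spec (by positivity)
  refine ⟨Finset.sup'_le _ _ fun z hz => sum_norm_le_opNorm hL hξ ⟨z, hZK hz⟩, ?_⟩
  refine opNorm_le_of_sum_norm_le hL (mul_nonneg hc₀ hmax_nonneg) fun x => ?_
  exact sum_norm_eval_le_of_norming hZne hc₀ (fun p hp => hnorm p (mem_degreeLE.1 hp) x x.2)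
    fun j => mem_degreeLE.2 (hφ j)

/-- Two-sided estimate of the Lebesgue constant of a sampling-based
polynomial projection-type operator by the max of its Lebesgue function on an
admissible mesh `Z` of `K` with norming constant `c`. -/
theorem lebesgue_constant_mesh_estimate (K : Set ℂ) [CompactSpace K]
    (n : ℕ) (hn : 1 ≤ n) (Z : Finset ℂ) (hZne : Z.Nonempty) (hZK : ↑Z ⊆ K)
    (c : ℝ) (hc : 1 ≤ c)
    (hnorm : ∀ p : Polynomial ℂ, p.degree ≤ (n : ℕ) →
      ∀ z ∈ K, ‖p.eval z‖ ≤
        c * Z.sup' hZne (fun w => ‖p.eval w‖))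
    (M : ℕ) (ξ : Fin M → K) (hξ : Function.Injective ξ)
    (φ : Fin M → Polynomial ℂ) (hφ : ∀ j, (φ j).degree ≤ (n : ℕ))
    (L : C(K, ℂ) →L[ℂ] C(K, ℂ))
    (hL : ∀ f : C(K, ℂ), ∀ z : K,
      L f z = ∑ j : Fin M, f (ξ j) * (φ j).eval (z : ℂ)) :
    Z.sup' hZne (fun z => ∑ j : Fin M, ‖(φ j).eval z‖) ≤ ‖L‖ ∧
    ‖L‖ ≤ c * Z.sup' hZne (fun z => ∑ j : Fin M, ‖(φ j).eval z‖) :=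
  lebesgue_constant_mesh_estimate_general K n Z hZne hZK c hc hnorm M ξ hξ φ hφ L hL
end

section
/- Under the hypotheses of the previous statement (i.e., $Z\subseteq K$ finite with $\sup_{z\in K}|p(z)|\leq c\max_{z\in Z}|p(z)|$ for all complex polynomials $p$ of degree at most $n$, and $L f(z)=\sum_{j=1}^{M}f(\xi_j)\phi_j(z)$ with $\xi_j\in K$ distinct and $\phi_j$ complex polynomials of degree at most $n$, $\lambda(z)=\sum_j|\phi_j(z)|$), the following error bounds hold: $0 \leq \|L\| - \max_{z\in Z}\lambda(z) \leq (c-1)\,\|L\|$ and $0 \leq \|L\| - \max_{z\in Z}\lambda(z) \leq (c-1)\,\max_{z\in Z}\lambda(z)$. -/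
/-!
Sampling at distinct nodes lets a continuous function of sup-norm one take any prescribed
values of modulus at most one there (Tietze), so choosing `conj φⱼ(z) / |φⱼ(z)|` at `ξⱼ` shows
that the Lebesgue function is bounded by `‖L‖` everywhere on `K`, in particular on `Z`.
Conversely every `L f` is a polynomial of degree at most `n`, so the norming inequality of the
mesh bounds `‖L f‖` by `c ‖f‖` times the maximum of the Lebesgue function on `Z`. The error
bounds are then arithmetic from `max_Z λ ≤ ‖L‖ ≤ c max_Z λ`.
-/

open Function Polynomial
open scoped ComplexConjugate

namespace RCLike

variable {𝕜 : Type*} [RCLike 𝕜]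

theorem conj_div_norm_mul_self (z : 𝕜) : conj z / ‖z‖ * z = ‖z‖ := by
  rw [div_mul_eq_mul_div, conj_mul, sq, mul_self_div_self]

theorem norm_conj_div_norm_le_one (z : 𝕜) : ‖conj z / ‖z‖‖ ≤ 1 := by
  rw [norm_div, norm_conj, norm_ofReal, abs_norm]
  exact div_self_le_one _

end RCLike

theorem norm_sum_mul_le_of_norm_le {R ι : Type*} [SeminormedRing R] [Fintype ι] {a b : ι → R}
    {C : ℝ} (ha : ∀ j, ‖a j‖ ≤ C) : ‖∑ j, a j * b j‖ ≤ C * ∑ j, ‖b j‖ := by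
  rw [Finset.mul_sum]
  refine (norm_sum_le _ _).trans (Finset.sum_le_sum fun j _ => ?_)
  exact (norm_mul_le _ _).trans (mul_le_mul_of_nonneg_right (ha j) (norm_nonneg _))

section Sampling

variable {T 𝕜 ι : Type*} [TopologicalSpace T] [CompactSpace T] [T2Space T] [RCLike 𝕜] [Fintype ι]

theorem ContinuousMap.exists_norm_le_one_forall_apply_eq {ξ : ι → T} (hξ : Injective ξ)
    {a : ι → 𝕜} (ha : ∀ j, ‖a j‖ ≤ 1) : ∃ f : C(T, 𝕜), ‖f‖ ≤ 1 ∧ ∀ j, f (ξ j) = a j := by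
  let _ : TopologicalSpace ι := ⊥
  have : DiscreteTopology ι := ⟨rfl⟩
  obtain ⟨f, hf_ball, hf_ξ⟩ := ContinuousMap.exists_extension_forall_mem
    (continuous_of_discreteTopology.isClosedEmbedding hξ) ⟨a, continuous_of_discreteTopology⟩
    (t := Metric.closedBall 0 1) (by simpa using ha)
  exact ⟨f, (f.norm_le zero_le_one).2 fun x => by simpa using hf_ball x,
    fun j => congr($hf_ξ j)⟩

theorem ContinuousLinearMap.sum_norm_le_opNorm_of_sampling {L : C(T, 𝕜) →L[𝕜] C(T, 𝕜)}
    {ξ : ι → T} (hξ : Injective ξ) {g : ι → T → 𝕜}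
    (hL : ∀ f x, L f x = ∑ j, f (ξ j) * g j x) (x : T) : ∑ j, ‖g j x‖ ≤ ‖L‖ := by
  obtain ⟨f, hf_norm, hf_ξ⟩ := ContinuousMap.exists_norm_le_one_forall_apply_eq hξ
    (a := fun j => conj (g j x) / ‖g j x‖) fun j => RCLike.norm_conj_div_norm_le_one _
  have hLf : L f x = ((∑ j, ‖g j x‖ : ℝ) : 𝕜) := by
    simp only [hL, hf_ξ, RCLike.conj_div_norm_mul_self, RCLike.ofReal_sum]
  calc ∑ j, ‖g j x‖ = ‖L f x‖ := by
        rw [hLf, RCLike.norm_ofReal, abs_of_nonneg (by positivity)]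
    _ ≤ ‖L f‖ := (L f).norm_coe_le_norm x
    _ ≤ ‖L‖ * ‖f‖ := L.le_opNorm f
    _ ≤ ‖L‖ := mul_le_of_le_one_right (norm_nonneg L) hf_norm

end Sampling

theorem ContinuousLinearMap.opNorm_le_of_sampling_polynomial {𝕜 ι : Type*} [RCLike 𝕜]
    [Fintype ι] {K : Set 𝕜} [CompactSpace K] {n : ℕ} {Z : Finset 𝕜} (hZne : Z.Nonempty)
    {c : ℝ} (hc : 0 ≤ c)
    (hnorm : ∀ p : 𝕜[X], p.degree ≤ n →
      ∀ z ∈ K, ‖p.eval z‖ ≤ c * Z.sup' hZne (fun w => ‖p.eval w‖))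
    {ξ : ι → K} {φ : ι → 𝕜[X]} (hφ : ∀ j, (φ j).degree ≤ n) {L : C(K, 𝕜) →L[𝕜] C(K, 𝕜)}
    (hL : ∀ f z, L f z = ∑ j, f (ξ j) * (φ j).eval (z : 𝕜)) :
    ‖L‖ ≤ c * Z.sup' hZne (fun z => ∑ j, ‖(φ j).eval z‖) := by
  set S := Z.sup' hZne (fun z => ∑ j, ‖(φ j).eval z‖)
  have hS : 0 ≤ S := hZne.elim fun z hz => Finset.le_sup'_of_le _ hz (by positivity)
  refine L.opNorm_le_bound (mul_nonneg hc hS) fun f =>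
    (ContinuousMap.norm_le _ (by positivity)).2 fun z => ?_
  set p := ∑ j, f (ξ j) • φ j
  have hp_eval (y : 𝕜) : p.eval y = ∑ j, f (ξ j) * (φ j).eval y := by
    simp only [p, eval_finsetSum, eval_smul, smul_eq_mul]
  have hp_deg : p.degree ≤ n := mem_degreeLE.1 <|
    Submodule.sum_mem _ fun j _ => Submodule.smul_mem _ _ (mem_degreeLE.2 (hφ j))
  have hp_Z : Z.sup' hZne (fun y => ‖p.eval y‖) ≤ ‖f‖ * S := Finset.sup'_le _ _ fun y hy => by
    rw [hp_eval]
    exact (norm_sum_mul_le_of_norm_le fun j => f.norm_coe_le_norm (ξ j)).trans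
      (mul_le_mul_of_nonneg_left (Finset.le_sup' (fun z => ∑ j, ‖(φ j).eval z‖) hy)
        (norm_nonneg f))
  calc ‖L f z‖ = ‖p.eval (z : 𝕜)‖ := by rw [hL, hp_eval]
    _ ≤ c * Z.sup' hZne (fun y => ‖p.eval y‖) := hnorm p hp_deg z z.2
    _ ≤ c * (‖f‖ * S) := by gcongr
    _ = c * S * ‖f‖ := by ring

theorem lebesgue_constant_mesh_error_bounds_general (K : Set ℂ) [CompactSpace K]
    (n : ℕ) (Z : Finset ℂ) (hZne : Z.Nonempty) (hZK : ↑Z ⊆ K)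
    (c : ℝ) (hc : 1 ≤ c)
    (hnorm : ∀ p : Polynomial ℂ, p.degree ≤ (n : ℕ) →
      ∀ z ∈ K, ‖p.eval z‖ ≤
        c * Z.sup' hZne (fun w => ‖p.eval w‖))
    (M : ℕ) (ξ : Fin M → K) (hξ : Function.Injective ξ)
    (φ : Fin M → Polynomial ℂ) (hφ : ∀ j, (φ j).degree ≤ (n : ℕ))
    (L : C(K, ℂ) →L[ℂ] C(K, ℂ))
    (hL : ∀ f : C(K, ℂ), ∀ z : K,
      L f z = ∑ j : Fin M, f (ξ j) * (φ j).eval (z : ℂ)) :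
    0 ≤ ‖L‖ - Z.sup' hZne (fun z => ∑ j : Fin M, ‖(φ j).eval z‖) ∧
    ‖L‖ - Z.sup' hZne (fun z => ∑ j : Fin M, ‖(φ j).eval z‖) ≤
      (c - 1) * ‖L‖ ∧
    ‖L‖ - Z.sup' hZne (fun z => ∑ j : Fin M, ‖(φ j).eval z‖) ≤
      (c - 1) * Z.sup' hZne (fun z => ∑ j : Fin M, ‖(φ j).eval z‖) := by
  set S := Z.sup' hZne (fun z => ∑ j : Fin M, ‖(φ j).eval z‖)
  have hS_le : S ≤ ‖L‖ := Finset.sup'_le _ _ fun z hz =>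
    L.sum_norm_le_opNorm_of_sampling hξ (g := fun j z => (φ j).eval (z : ℂ)) hL ⟨z, hZK hz⟩
  have hL_le : ‖L‖ ≤ c * S :=
    L.opNorm_le_of_sampling_polynomial hZne (by linarith) hnorm hφ hL
  refine ⟨by linarith, ?_, by linarith⟩
  linarith [mul_le_mul_of_nonneg_left hS_le (sub_nonneg.2 hc)]

/-- Error bounds for the approximation of the Lebesgue constant of a
sampling-based polynomial projection-type operator by the max of its Lebesgue
function on an admissible mesh `Z` of `K` with norming constant `c`. -/
theorem lebesgue_constant_mesh_error_bounds (K : Set ℂ) [CompactSpace K]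
    (n : ℕ) (hn : 1 ≤ n) (Z : Finset ℂ) (hZne : Z.Nonempty) (hZK : ↑Z ⊆ K)
    (c : ℝ) (hc : 1 ≤ c)
    (hnorm : ∀ p : Polynomial ℂ, p.degree ≤ (n : ℕ) →
      ∀ z ∈ K, ‖p.eval z‖ ≤
        c * Z.sup' hZne (fun w => ‖p.eval w‖))
    (M : ℕ) (ξ : Fin M → K) (hξ : Function.Injective ξ)
    (φ : Fin M → Polynomial ℂ) (hφ : ∀ j, (φ j).degree ≤ (n : ℕ))
    (L : C(K, ℂ) →L[ℂ] C(K, ℂ))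
    (hL : ∀ f : C(K, ℂ), ∀ z : K,
      L f z = ∑ j : Fin M, f (ξ j) * (φ j).eval (z : ℂ)) :
    0 ≤ ‖L‖ - Z.sup' hZne (fun z => ∑ j : Fin M, ‖(φ j).eval z‖) ∧
    ‖L‖ - Z.sup' hZne (fun z => ∑ j : Fin M, ‖(φ j).eval z‖) ≤
      (c - 1) * ‖L‖ ∧
    ‖L‖ - Z.sup' hZne (fun z => ∑ j : Fin M, ‖(φ j).eval z‖) ≤
      (c - 1) * Z.sup' hZne (fun z => ∑ j : Fin M, ‖(φ j).eval z‖) :=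
  lebesgue_constant_mesh_error_bounds_general K n Z hZne hZK c hc hnorm M ξ hξ φ hφ L hL
end

section
/- Let $K\subset\mathbb{C}$ be a compact set, $n\geq 1$, and let $Z\subseteq K$ be a finite set with at least $n+1$ points and $c\geq 1$ a constant such that $\sup_{z\in K}|p(z)|\leq c\,\max_{z\in Z}|p(z)|$ for every complex polynomial $p$ of degree at most $n$. Let $\xi_1,\dots,\xi_{n+1}\in Z$ be distinct points maximizing $|\det[\xi_i^{j-1}]_{1\leq i,j\leq n+1}|$ over all $(n+1)$-tuples of distinct points of $Z$ (Fekete points extracted from the mesh $Z$). Then the Lebesgue constant of interpolation at $\xi_1,\dots,\xi_{n+1}$ satisfies $\sup_{z\in K}\sum_{j=1}^{n+1}|\ell_j(z)| \leq c\,(n+1)$, where $\ell_j(z)=\prod_{k\neq j}(z-\xi_k)/(\xi_j-\xi_k)$ are the fundamental Lagrange polynomials. -/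
/-!
Replacing the node `ξⱼ` by a point `w` multiplies the Vandermonde determinant by `ℓⱼ(w)`
(Cramer's rule: by Lagrange interpolation of `X^m`, the new row `(w^m)ₘ` is the combination
`∑ₖ ℓₖ(w) (ξₖ^m)ₘ` of the old rows).
Maximality of the determinant over the mesh `Z` therefore gives `|ℓⱼ| ≤ 1` on `Z`, the norming
inequality gives `|ℓⱼ| ≤ c` on `K`, and summing the `n + 1` fundamental polynomials gives the bound.
-/

open Finset Polynomial

namespace Lagrange

section Field

variable {F : Type*} [Field F]

theorem eval_basis {ι : Type*} [DecidableEq ι] (s : Finset ι) (v : ι → F) (i : ι) (x : F) :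
    (Lagrange.basis s v i).eval x = ∏ k ∈ s.erase i, (x - v k) / (v i - v k) := by
  simp only [Lagrange.basis, basisDivisor, eval_prod, eval_mul, eval_C, eval_sub, eval_X]
  exact prod_congr rfl fun _ _ => inv_mul_eq_div _ _

theorem pow_eq_sum_pow_mul_eval_basis {n : ℕ} {v : Fin n → F} (hv : Function.Injective v)
    {m : ℕ} (hm : m < n) (x : F) :
    x ^ m = ∑ k, v k ^ m * (Lagrange.basis univ v k).eval x := by
  have hdeg : (X ^ m : F[X]).degree < #(univ : Finset (Fin n)) := by
    rw [degree_X_pow, card_univ, Fintype.card_fin]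
    exact_mod_cast hm
  conv_lhs => rw [← eval_X_pow (x := x), eq_interpolate hv.injOn hdeg]
  simp [interpolate_apply, eval_finsetSum]

theorem det_vandermonde_update {n : ℕ} {v : Fin n → F} (hv : Function.Injective v)
    (j : Fin n) (x : F) :
    (Matrix.vandermonde (Function.update v j x)).det =
      (Lagrange.basis univ v j).eval x * (Matrix.vandermonde v).det := by
  have hrows : Matrix.vandermonde (Function.update v j x) =
      (Matrix.vandermonde v).updateRow j
        (∑ k, (Lagrange.basis univ v k).eval x • Matrix.vandermonde v k) := by
    ext i m
    by_cases hij : i = j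
    · subst hij
      rw [Matrix.updateRow_self, Finset.sum_apply, Matrix.vandermonde_apply,
        Function.update_self, pow_eq_sum_pow_mul_eval_basis hv m.isLt]
      simp [Matrix.vandermonde_apply, mul_comm]
    · simp [Matrix.vandermonde_apply, hij]
  rw [hrows, Matrix.det_updateRow_sum, smul_eq_mul]

end Field

theorem norm_eval_basis_le_one_of_det_vandermonde_max {F : Type*} [NormedField F] {n : ℕ}
    {Z : Set F} {ξ : Fin n → F} (hξZ : ∀ i, ξ i ∈ Z) (hξ : Function.Injective ξ)
    (hmax : ∀ η : Fin n → F, (∀ i, η i ∈ Z) → Function.Injective η →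
      ‖(Matrix.vandermonde η).det‖ ≤ ‖(Matrix.vandermonde ξ).det‖)
    (j : Fin n) {w : F} (hw : w ∈ Z) :
    ‖(Lagrange.basis univ ξ j).eval w‖ ≤ 1 := by
  have hdet := det_vandermonde_update hξ j w
  have hξdet : (Matrix.vandermonde ξ).det ≠ 0 := Matrix.det_vandermonde_ne_zero_iff.2 hξ
  by_cases hinj : Function.Injective (Function.update ξ j w)
  · have hηZ : ∀ i, Function.update ξ j w i ∈ Z := by
      rw [Function.forall_update_iff]
      exact ⟨hw, fun i _ => hξZ i⟩
    have := hmax _ hηZ hinj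
    rw [hdet, norm_mul] at this
    exact (mul_le_iff_le_one_left (norm_pos_iff.2 hξdet)).1 this
  · have hzero : (Matrix.vandermonde (Function.update ξ j w)).det = 0 := by
      rwa [← Matrix.det_vandermonde_ne_zero_iff, not_not] at hinj
    rw [hdet, mul_eq_zero, or_iff_left hξdet] at hzero
    simp [hzero]

end Lagrange

theorem mesh_fekete_lebesgue_bound_general (K : Set ℂ) (n : ℕ)
    (Z : Finset ℂ)
    (hZne : Z.Nonempty) (c : ℝ) (hc : 1 ≤ c)
    (hnorm : ∀ p : Polynomial ℂ, p.degree ≤ (n : ℕ) →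
      ∀ z ∈ K, ‖p.eval z‖ ≤
        c * Z.sup' hZne (fun w => ‖p.eval w‖))
    (ξ : Fin (n + 1) → ℂ) (hξZ : ∀ i, ξ i ∈ Z) (hξ : Function.Injective ξ)
    (hmax : ∀ η : Fin (n + 1) → ℂ, (∀ i, η i ∈ Z) → Function.Injective η →
      ‖(Matrix.vandermonde η).det‖ ≤
        ‖(Matrix.vandermonde ξ).det‖) :
    ∀ z ∈ K,
      ∑ j : Fin (n + 1),
        ‖∏ k ∈ Finset.univ.erase j, (z - ξ k) / (ξ j - ξ k)‖ ≤
          c * (n + 1) := by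
  intro z hz
  have hterm (j : Fin (n + 1)) : ‖(Lagrange.basis univ ξ j).eval z‖ ≤ c := by
    have hdeg : (Lagrange.basis univ ξ j).degree ≤ n := by
      simp [Lagrange.degree_basis hξ.injOn (mem_univ j)]
    have hmesh : Z.sup' hZne (fun w => ‖(Lagrange.basis univ ξ j).eval w‖) ≤ 1 :=
      sup'_le _ _ fun w hw =>
        Lagrange.norm_eval_basis_le_one_of_det_vandermonde_max hξZ hξ hmax j hw
    exact (hnorm _ hdeg z hz).trans (mul_le_of_le_one_right (by linarith) hmesh)
  simp_rw [← Lagrange.eval_basis]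
  calc ∑ j, ‖(Lagrange.basis univ ξ j).eval z‖
      ≤ ∑ _j : Fin (n + 1), c := sum_le_sum fun j _ => hterm j
    _ = c * (n + 1) := by simp [mul_comm]

/-- Approximate Fekete points extracted from an admissible mesh: if
`ξ₁,…,ξ_{n+1}` maximize the modulus of the Vandermonde determinant over all
`(n+1)`-tuples of distinct points of a norming set `Z ⊆ K` with constant `c`,
then the Lebesgue function of interpolation at the `ξⱼ` is bounded by
`c (n+1)` on `K`. -/
theorem mesh_fekete_lebesgue_bound (K : Set ℂ) (hK : IsCompact K) (n : ℕ)
    (hn : 1 ≤ n) (Z : Finset ℂ) (hZK : ↑Z ⊆ K) (hZcard : n + 1 ≤ Z.card)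
    (hZne : Z.Nonempty) (c : ℝ) (hc : 1 ≤ c)
    (hnorm : ∀ p : Polynomial ℂ, p.degree ≤ (n : ℕ) →
      ∀ z ∈ K, ‖p.eval z‖ ≤
        c * Z.sup' hZne (fun w => ‖p.eval w‖))
    (ξ : Fin (n + 1) → ℂ) (hξZ : ∀ i, ξ i ∈ Z) (hξ : Function.Injective ξ)
    (hmax : ∀ η : Fin (n + 1) → ℂ, (∀ i, η i ∈ Z) → Function.Injective η →
      ‖(Matrix.vandermonde η).det‖ ≤
        ‖(Matrix.vandermonde ξ).det‖) :
    ∀ z ∈ K,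
      ∑ j : Fin (n + 1),
        ‖∏ k ∈ Finset.univ.erase j, (z - ξ k) / (ξ j - ξ k)‖ ≤
          c * (n + 1) :=
  mesh_fekete_lebesgue_bound_general K n Z hZne c hc hnorm ξ hξZ hξ hmax
end
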